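/- arXiv:1011.0827 — 2 statements merged into one kernel-verified Lean document; each statement's English description precedes it below -/
import Mathlib

section
/- For cycles C_{n₁},...,C_{n_r} with n_k ≥ 2 (interpreting C₂ as the edge P₂), the Cartesian product C_{n₁}□···□C_{n_r} satisfies Σ_k ⌊n_k/2⌋ ≤ rc(C_{n₁}□···□C_{n_r}) ≤ src(C_{n₁}□···□C_{n_r}) ≤ Σ_k ⌈n_k/2⌉. -/
open SimpleGraph Finset

/-- An edge-coloring with colors `< k` such that every two vertices are joined by a
path whose edge colors are pairwise distinct. -/
def RainbowConnected {V : Type*} (G : SimpleGraph V) (k : ℕ) : Prop :=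
  ∃ c : Sym2 V → ℕ, (∀ e ∈ G.edgeSet, c e < k) ∧
    ∀ u v : V, ∃ p : G.Walk u v, p.IsPath ∧ (p.edges.map c).Nodup

/-- As above, but the rainbow path must be a geodesic. -/
def StrongRainbowConnected {V : Type*} (G : SimpleGraph V) (k : ℕ) : Prop :=
  ∃ c : Sym2 V → ℕ, (∀ e ∈ G.edgeSet, c e < k) ∧
    ∀ u v : V, ∃ p : G.Walk u v, p.IsPath ∧ p.length = G.dist u v ∧ (p.edges.map c).Nodup

/-- The rainbow connection number. -/
noncomputable def rc {V : Type*} (G : SimpleGraph V) : ℕ := sInf {k | RainbowConnected G k}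

/-- The strong rainbow connection number. -/
noncomputable def src {V : Type*} (G : SimpleGraph V) : ℕ := sInf {k | StrongRainbowConnected G k}
/-- The Cartesian (box) product of a family of graphs. -/
def boxProdFamily {ι : Type*} {α : ι → Type*} (G : ∀ i, SimpleGraph (α i)) :
    SimpleGraph (∀ i, α i) where
  Adj x y := ∃ i, (G i).Adj (x i) (y i) ∧ ∀ j, j ≠ i → x j = y j
  symm := ⟨fun x y ⟨i, h, hj⟩ => ⟨i, h.symm, fun j hji => (hj j hji).symm⟩⟩
  loopless := ⟨fun x ⟨i, h, _⟩ => (G i).loopless.irrefl _ h⟩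

/-!
Every walk in a box product changes one coordinate per step, so its length is at least the sum of
the distances between the coordinates of its ends. A rainbow path with `k` colours has length at
most `k`, so `rc` is at least the distance from `(0, …, 0)` to `(⌊n₁/2⌋, …, ⌊n_r/2⌋)`, which is
`∑ ⌊n_k/2⌋`.

For the upper bound, colour the edge `{a, a + 1}` of `C_N` by `a mod ⌈N/2⌉`. Two edges of a run of
at most `⌊N/2⌋` consecutive edges start at positions whose difference mod `N` is `d` or `N - d` with
`0 < d < ⌊N/2⌋`; neither is a multiple of `⌈N/2⌉`, because `⌈N/2⌉ < N - d < 2⌈N/2⌉`. Every pair of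
vertices is joined by a geodesic that is such a run. In the product the factor colourings use
pairwise disjoint blocks of colours, and following a rainbow geodesic in each coordinate in turn
gives a rainbow geodesic of the product, with `∑ ⌈n_k/2⌉` colours in all.
-/

section Rainbow

variable {V : Type*} {G : SimpleGraph V} {k : ℕ}

theorem StrongRainbowConnected.rainbowConnected (h : StrongRainbowConnected G k) :
    RainbowConnected G k := by
  obtain ⟨c, hc, hgeo⟩ := h
  refine ⟨c, hc, fun u v => ?_⟩
  obtain ⟨p, hp, -, hnd⟩ := hgeo u v
  exact ⟨p, hp, hnd⟩

theorem StrongRainbowConnected.src_le (h : StrongRainbowConnected G k) : src G ≤ k :=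
  Nat.sInf_le h

theorem StrongRainbowConnected.rc_le_src (h : StrongRainbowConnected G k) : rc G ≤ src G :=
  Nat.sInf_le (Nat.sInf_mem (s := {k | StrongRainbowConnected G k}) ⟨k, h⟩).rainbowConnected

theorem RainbowConnected.rainbowConnected_rc (h : RainbowConnected G k) :
    RainbowConnected G (rc G) :=
  Nat.sInf_mem (s := {k | RainbowConnected G k}) ⟨k, h⟩

theorem RainbowConnected.exists_walk_length_le (h : RainbowConnected G k) (u v : V) :
    ∃ p : G.Walk u v, p.length ≤ k := by
  obtain ⟨c, hc, hrb⟩ := h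
  obtain ⟨p, -, hnd⟩ := hrb u v
  refine ⟨p, ?_⟩
  have hsub : (p.edges.map c).toFinset ⊆ range k := by
    intro a ha
    obtain ⟨e, he, rfl⟩ := List.mem_map.mp (List.mem_toFinset.mp ha)
    exact mem_range.mpr (hc e (p.edges_subset_edgeSet he))
  simpa [List.toFinset_card_of_nodup hnd] using card_le_card hsub

end Rainbow

section Cycle

open scoped Fin.CommRing

variable {n : ℕ}

def cyclicNorm {N : ℕ} (a : Fin N) : ℕ := min a.val (-a).val

lemma cyclicNorm_neg {N : ℕ} (a : Fin N) : cyclicNorm (-a) = cyclicNorm a := by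
  simp [cyclicNorm, min_comm]

lemma cyclicNorm_add_one_le (a : Fin (n + 2)) : cyclicNorm (a + 1) ≤ cyclicNorm a + 1 := by
  have ha := a.isLt
  simp only [cyclicNorm, Fin.val_neg, Fin.val_add_one, Fin.ext_iff, Fin.val_zero, Fin.val_last]
  split_ifs <;> omega

lemma cyclicNorm_natCast {L : ℕ} (hL : L ≤ (n + 2) / 2) : cyclicNorm (L : Fin (n + 2)) = L := by
  have hval : (L : Fin (n + 2)).val = L := Fin.val_cast_of_lt (by omega)
  simp only [cyclicNorm, Fin.val_neg, Fin.ext_iff, hval, Fin.val_zero]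
  split_ifs <;> omega

lemma cyclicNorm_sub_le_length {u v : Fin (n + 2)} (p : (cycleGraph (n + 2)).Walk u v) :
    cyclicNorm (v - u) ≤ p.length := by
  induction p with
  | nil => simp [cyclicNorm]
  | @cons u w v huw q ih =>
    rw [Walk.length_cons]
    rcases cycleGraph_adj.mp huw with h | h
    · have hvu : v - u = -((w - v) + 1) := by rw [← h]; ring
      calc cyclicNorm (v - u) = cyclicNorm ((w - v) + 1) := by rw [hvu, cyclicNorm_neg]
        _ ≤ cyclicNorm (w - v) + 1 := cyclicNorm_add_one_le _
        _ = cyclicNorm (v - w) + 1 := by rw [← neg_sub, cyclicNorm_neg]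
        _ ≤ q.length + 1 := by omega
    · have hvu : v - u = (v - w) + 1 := by rw [← h]; ring
      calc cyclicNorm (v - u) = cyclicNorm ((v - w) + 1) := by rw [hvu]
        _ ≤ cyclicNorm (v - w) + 1 := cyclicNorm_add_one_le _
        _ ≤ q.length + 1 := by omega

lemma cycleGraph_adj_add_one (a : Fin (n + 2)) : (cycleGraph (n + 2)).Adj a (a + 1) :=
  cycleGraph_adj.mpr (Or.inr (add_sub_cancel_left a 1))

def cycleUpWalk (u : Fin (n + 2)) : (L : ℕ) → (cycleGraph (n + 2)).Walk u (u + L)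
  | 0 => Walk.nil.copy rfl (by simp)
  | L + 1 => ((cycleUpWalk u L).concat (cycleGraph_adj_add_one _)).copy rfl (by push_cast; ring)

@[simp] lemma length_cycleUpWalk (u : Fin (n + 2)) (L : ℕ) : (cycleUpWalk u L).length = L := by
  induction L with
  | zero => simp [cycleUpWalk]
  | succ L ih => simp [cycleUpWalk, ih]

lemma edges_cycleUpWalk (u : Fin (n + 2)) (L : ℕ) :
    (cycleUpWalk u L).edges = (List.range L).map fun t : ℕ => s(u + t, u + t + 1) := by
  induction L with
  | zero => simp [cycleUpWalk]
  | succ L ih => simp [cycleUpWalk, ih, List.range_succ]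

lemma dist_cycleGraph_add_natCast (u : Fin (n + 2)) {L : ℕ} (hL : L ≤ (n + 2) / 2) :
    (cycleGraph (n + 2)).dist u (u + L) = L := by
  refine le_antisymm (by simpa using dist_le (cycleUpWalk u L)) ?_
  obtain ⟨p, hp⟩ := (cycleGraph_connected (n := n + 1)).exists_walk_length_eq_dist u (u + L)
  simpa [hp, cyclicNorm_natCast hL] using cyclicNorm_sub_le_length p

-- `(n + 3) / 2 = ⌈(n + 2) / 2⌉`. For `n = 0` both orientations of the single edge match the first
-- case, which is harmless because then there is only one colour.
def cycleColoring (n : ℕ) : Sym2 (Fin (n + 2)) → ℕ :=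
  Sym2.lift ⟨fun a b => if b = a + 1 then a.val % ((n + 3) / 2)
      else if a = b + 1 then b.val % ((n + 3) / 2) else 0, by
    intro a b
    dsimp only
    by_cases hb : b = a + 1 <;> by_cases ha : a = b + 1
    · rw [if_pos hb, if_pos ha]
      have h2 : (1 + 1 : Fin (n + 2)) = 0 := by
        apply add_left_cancel (a := a); rw [add_zero, ← add_assoc, ← hb, ← ha]
      obtain rfl : n = 0 := by
        rcases n with _ | n
        · rfl
        · simp [Fin.ext_iff, Fin.val_add, Nat.mod_eq_of_lt (show 2 < n + 1 + 2 by omega)] at h2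
      rw [Nat.mod_one, Nat.mod_one]
    · rw [if_pos hb, if_neg ha, if_pos hb]
    · rw [if_neg hb, if_pos ha, if_pos ha]
    · rw [if_neg hb, if_neg ha, if_neg ha, if_neg hb]⟩

lemma cycleColoring_mk_add_one (a : Fin (n + 2)) :
    cycleColoring n s(a, a + 1) = a.val % ((n + 3) / 2) := by
  rw [cycleColoring, Sym2.lift_mk]
  exact if_pos rfl

lemma cycleColoring_lt (e : Sym2 (Fin (n + 2))) : cycleColoring n e < (n + 3) / 2 := by
  induction e using Sym2.ind with
  | _ a b =>
    simp only [cycleColoring, Sym2.lift_mk]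
    split_ifs <;> first | exact Nat.mod_lt _ (by omega) | omega

lemma val_mod_ne_val_add_natCast_mod (a : Fin (n + 2)) {d : ℕ} (hd : 0 < d)
    (hdn : d < (n + 2) / 2) : a.val % ((n + 3) / 2) ≠ (a + d).val % ((n + 3) / 2) := by
  intro h
  have ha := a.isLt
  have hval : (a + d).val = (a.val + d) % (n + 2) := by
    rw [Fin.val_add, Fin.val_natCast, Nat.add_mod_mod]
  rcases lt_or_ge (a.val + d) (n + 2) with hlt | hge
  · rw [hval, Nat.mod_eq_of_lt hlt] at h
    have hdvd : (n + 3) / 2 ∣ a.val + d - a.val := (Nat.modEq_iff_dvd' (by omega)).mp h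
    rw [Nat.add_sub_cancel_left] at hdvd
    exact Nat.not_dvd_of_pos_of_lt hd (by omega) hdvd
  · rw [hval, Nat.mod_eq_sub_mod hge, Nat.mod_eq_of_lt (a := a.val + d - (n + 2)) (by omega)] at h
    have hdvd : (n + 3) / 2 ∣ a.val - (a.val + d - (n + 2)) :=
      (Nat.modEq_iff_dvd' (by omega)).mp h.symm
    have hdvd' := Nat.dvd_sub hdvd (dvd_refl ((n + 3) / 2))
    exact Nat.not_dvd_of_pos_of_lt (by omega) (by omega) hdvd'

lemma nodup_map_cycleColoring_edges_cycleUpWalk (u : Fin (n + 2)) {L : ℕ}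
    (hL : L ≤ (n + 2) / 2) : ((cycleUpWalk u L).edges.map (cycleColoring n)).Nodup := by
  rw [edges_cycleUpWalk, List.map_map]
  have key : ∀ t t' : ℕ, t < t' → t' < L →
      cycleColoring n s(u + t, u + t + 1) ≠ cycleColoring n s(u + t', u + t' + 1) := by
    intro t t' htt' ht'
    have hshift : u + t + ((t' - t : ℕ) : Fin (n + 2)) = u + t' := by
      rw [Nat.cast_sub htt'.le]; ring
    rw [cycleColoring_mk_add_one, cycleColoring_mk_add_one, ← hshift]
    exact val_mod_ne_val_add_natCast_mod _ (by omega) (by omega)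
  refine List.nodup_range.map_on fun t ht t' ht' heq => ?_
  simp only [List.mem_range, Function.comp_apply] at ht ht' heq
  by_contra hne
  rcases lt_or_gt_of_ne hne with hlt | hlt
  · exact key t t' hlt ht' heq
  · exact key t' t hlt ht heq.symm

lemma val_sub_le_half_or (u v : Fin (n + 2)) :
    (v - u).val ≤ (n + 2) / 2 ∨ (u - v).val ≤ (n + 2) / 2 := by
  have := (v - u).isLt
  rw [← neg_sub v u, Fin.val_neg]
  split_ifs <;> omega

lemma exists_rainbow_geodesic_cycleGraph {u v : Fin (n + 2)} (h : (v - u).val ≤ (n + 2) / 2) :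
    ∃ p : (cycleGraph (n + 2)).Walk u v, p.length = (cycleGraph (n + 2)).dist u v ∧
      (p.edges.map (cycleColoring n)).Nodup := by
  have hv : u + ((v - u).val : Fin (n + 2)) = v := by rw [Fin.cast_val_eq_self]; ring
  refine ⟨(cycleUpWalk u (v - u).val).copy rfl hv, ?_, ?_⟩
  · rw [Walk.length_copy, length_cycleUpWalk]
    conv_rhs => rw [← hv]
    rw [dist_cycleGraph_add_natCast u h]
  · rw [Walk.edges_copy]
    exact nodup_map_cycleColoring_edges_cycleUpWalk u h

theorem strongRainbowConnected_cycleGraph {N : ℕ} (hN : 2 ≤ N) :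
    StrongRainbowConnected (cycleGraph N) ((N + 1) / 2) := by
  obtain ⟨n, rfl⟩ : ∃ n, N = n + 2 := ⟨N - 2, by omega⟩
  refine ⟨cycleColoring n, fun e _ => cycleColoring_lt e, fun u v => ?_⟩
  suffices ∃ p : (cycleGraph (n + 2)).Walk u v, p.length = (cycleGraph (n + 2)).dist u v ∧
      (p.edges.map (cycleColoring n)).Nodup by
    obtain ⟨p, hp, hnd⟩ := this
    exact ⟨p, p.isPath_of_length_eq_dist hp, hp, hnd⟩
  rcases val_sub_le_half_or u v with h | h
  · exact exists_rainbow_geodesic_cycleGraph h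
  · obtain ⟨p, hp, hnd⟩ := exists_rainbow_geodesic_cycleGraph h
    refine ⟨p.reverse, by rw [Walk.length_reverse, hp, dist_comm], ?_⟩
    rwa [Walk.edges_reverse, List.map_reverse, List.nodup_reverse]

theorem dist_cycleGraph_zero_half {N : ℕ} (hN : 2 ≤ N) :
    (cycleGraph N).dist ⟨0, by omega⟩ ⟨N / 2, by omega⟩ = N / 2 := by
  obtain ⟨n, rfl⟩ : ∃ n, N = n + 2 := ⟨N - 2, by omega⟩
  convert dist_cycleGraph_add_natCast (0 : Fin (n + 2)) le_rfl using 2 <;> ext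
  · rfl
  · rw [zero_add, Fin.val_natCast, Nat.mod_eq_of_lt (by omega)]

end Cycle

section BoxProduct

variable {ι : Type*} {α : ι → Type*} {G : ∀ i, SimpleGraph (α i)}

theorem sum_dist_le_length_boxProdFamily [Fintype ι] {x y : ∀ i, α i}
    (p : (boxProdFamily G).Walk x y) : ∑ i, (G i).dist (x i) (y i) ≤ p.length := by
  classical
  induction p with
  | nil => simp
  | @cons x w y hxw q ih =>
    rw [Walk.length_cons]
    obtain ⟨i, hi, hrest⟩ := hxw
    have hstep : ∀ j,
        (G j).dist (x j) (y j) ≤ (if j = i then 1 else 0) + (G j).dist (w j) (y j) := by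
      intro j
      by_cases hj : j = i
      · subst hj
        simpa [dist_eq_one_iff_adj.mpr hi] using hi.reachable.dist_triangle_left (y j)
      · simp [hj, hrest j hj]
    calc ∑ j, (G j).dist (x j) (y j)
        ≤ ∑ j, ((if j = i then 1 else 0) + (G j).dist (w j) (y j)) :=
          sum_le_sum fun j _ => hstep j
      _ = 1 + ∑ j, (G j).dist (w j) (y j) := by
          rw [sum_add_distrib, sum_ite_eq', if_pos (mem_univ i)]
      _ ≤ q.length + 1 := by omega

def boxProdFamily.updateHom [DecidableEq ι] (x : ∀ i, α i) (i : ι) : G i →g boxProdFamily G where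
  toFun := Function.update x i
  map_rel' {a b} h := ⟨i, by simpa using h, fun j hj => by simp [Function.update_of_ne hj]⟩

@[simp] lemma boxProdFamily.updateHom_apply [DecidableEq ι] (x : ∀ i, α i) (i : ι) (a : α i) :
    boxProdFamily.updateHom (G := G) x i a = Function.update x i a := rfl

section Coloring

variable [Fintype ι] [LinearOrder ι] {m : ι → ℕ} {c : ∀ i, Sym2 (α i) → ℕ}

def colorOffset (m : ι → ℕ) (i : ι) : ℕ := ∑ j with j < i, m j

def colorBlock (m : ι → ℕ) (i : ι) : Finset ℕ := Ico (colorOffset m i) (colorOffset m i + m i)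

lemma colorOffset_add_le_of_lt {i j : ι} (h : i < j) :
    colorOffset m i + m i ≤ colorOffset m j := by
  have hi : i ∉ ({k | k < i} : Finset ι) := by simp
  rw [colorOffset, add_comm, ← sum_insert hi]
  refine sum_le_sum_of_subset fun k hk => ?_
  simp only [mem_insert, mem_filter, mem_univ, true_and] at hk ⊢
  rcases hk with rfl | hk
  · exact h
  · exact hk.trans h

lemma colorOffset_add_le_sum (i : ι) : colorOffset m i + m i ≤ ∑ j, m j := by
  have hi : i ∉ ({k | k < i} : Finset ι) := by simp
  rw [colorOffset, add_comm, ← sum_insert hi]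
  exact sum_le_sum_of_subset (subset_univ _)

lemma pairwise_disjoint_colorBlock :
    Pairwise fun i j => Disjoint (colorBlock m i) (colorBlock m j) := by
  intro i j hij
  rw [colorBlock, colorBlock, Finset.disjoint_left]
  intro col hi hj
  simp only [mem_Ico] at hi hj
  rcases lt_or_gt_of_ne hij with h | h
  · have := colorOffset_add_le_of_lt (m := m) h; omega
  · have := colorOffset_add_le_of_lt (m := m) h; omega

open Classical in
noncomputable def boxColoring (m : ι → ℕ) (c : ∀ i, Sym2 (α i) → ℕ) : Sym2 (∀ i, α i) → ℕ :=
  Sym2.lift ⟨fun a b => ∑ i, if a i = b i then 0 else colorOffset m i + c i s(a i, b i),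
    fun a b => sum_congr rfl fun i _ => by simp only [eq_comm (a := a i), Sym2.eq_swap]⟩

lemma boxColoring_mk {a b : ∀ i, α i} {i : ι} (hi : a i ≠ b i) (hrest : ∀ j ≠ i, a j = b j) :
    boxColoring m c s(a, b) = colorOffset m i + c i s(a i, b i) := by
  rw [boxColoring, Sym2.lift_mk]
  dsimp only
  rw [sum_eq_single i (fun j _ hj => if_pos (hrest j hj)) (by simp), if_neg hi]

lemma boxColoring_lt_sum (hc : ∀ i, ∀ e ∈ (G i).edgeSet, c i e < m i) :
    ∀ e ∈ (boxProdFamily G).edgeSet, boxColoring m c e < ∑ i, m i := by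
  intro e he
  induction e using Sym2.ind with
  | _ a b =>
    obtain ⟨i, hi, hrest⟩ := (mem_edgeSet _).mp he
    rw [boxColoring_mk hi.ne hrest]
    have := hc i s(a i, b i) hi
    have := colorOffset_add_le_sum (m := m) i
    omega

lemma exists_walk_boxProdFamily_update (x : ∀ i, α i) {k : ι} {b : α k}
    (q : (G k).Walk (x k) b) :
    ∃ Q : (boxProdFamily G).Walk x (Function.update x k b), Q.length = q.length ∧
      Q.edges.map (boxColoring m c) = (q.edges.map (c k)).map (colorOffset m k + ·) := by
  refine ⟨(q.map (boxProdFamily.updateHom x k)).copy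
    ((boxProdFamily.updateHom_apply x k _).trans (Function.update_eq_self k x))
    (boxProdFamily.updateHom_apply x k b), by rw [Walk.length_copy, Walk.length_map], ?_⟩
  rw [Walk.edges_copy, Walk.edges_map, List.map_map, List.map_map]
  refine List.map_congr_left fun e he => ?_
  have hadj := q.edges_subset_edgeSet he
  clear he
  induction e using Sym2.ind with
  | _ a' b' =>
    have hne : a' ≠ b' := (G k).ne_of_adj hadj
    rw [Function.comp_apply, Sym2.map_mk, boxColoring_mk (i := k) (by simpa using hne)
      (fun j hj => by simp [Function.update_of_ne hj])]
    simp

theorem exists_rainbow_walk_boxProdFamily (hc : ∀ i, ∀ e ∈ (G i).edgeSet, c i e < m i)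
    (hgeo : ∀ i (a b : α i), ∃ q : (G i).Walk a b,
      q.length = (G i).dist a b ∧ (q.edges.map (c i)).Nodup)
    (s : Finset ι) {x y : ∀ i, α i} (hxy : ∀ i ∉ s, x i = y i) :
    ∃ P : (boxProdFamily G).Walk x y, P.length = ∑ i ∈ s, (G i).dist (x i) (y i) ∧
      (P.edges.map (boxColoring m c)).Nodup ∧
      ∀ col ∈ P.edges.map (boxColoring m c), ∃ i ∈ s, col ∈ colorBlock m i := by
  induction s using Finset.induction_on generalizing x with
  | empty =>
    obtain rfl : x = y := funext fun i => hxy i (notMem_empty i)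
    exact ⟨.nil, by simp, by simp, by simp⟩
  | @insert k s hks ih =>
    obtain ⟨q, hq_len, hq_nd⟩ := hgeo k (x k) (y k)
    obtain ⟨Q, hQ_len, hQ_col⟩ := exists_walk_boxProdFamily_update (m := m) (c := c) x q
    have hupd : ∀ i ∈ s, Function.update x k (y k) i = x i := fun i hi =>
      Function.update_of_ne (by rintro rfl; exact hks hi) _ _
    obtain ⟨P, hP_len, hP_nd, hP_blk⟩ := ih (x := Function.update x k (y k)) fun i hi => by
      by_cases hik : i = k
      · subst hik; simp
      · rw [Function.update_of_ne hik]; exact hxy i (by simp [hik, hi])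
    have hQ_blk : ∀ col ∈ Q.edges.map (boxColoring m c), col ∈ colorBlock m k := by
      simp only [hQ_col, List.map_map, List.mem_map, Function.comp_apply, colorBlock, mem_Ico]
      rintro _ ⟨e, he, rfl⟩
      have := hc k e (q.edges_subset_edgeSet he)
      omega
    refine ⟨Q.append P, ?_, ?_, ?_⟩
    · rw [Walk.length_append, hQ_len, hq_len, hP_len, sum_insert hks]
      exact congrArg _ (sum_congr rfl fun i hi => by rw [hupd i hi])
    · rw [Walk.edges_append, List.map_append, List.nodup_append]
      refine ⟨hQ_col ▸ hq_nd.map (add_right_injective _), hP_nd,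
        fun col hQ col' hP => ?_⟩
      obtain ⟨i, hi, hcol'⟩ := hP_blk col' hP
      rintro rfl
      exact Finset.disjoint_left.mp (pairwise_disjoint_colorBlock (m := m)
        (by rintro rfl; exact hks hi)) (hQ_blk col hQ) hcol'
    · intro col hcol
      rw [Walk.edges_append, List.map_append, List.mem_append] at hcol
      rcases hcol with hcol | hcol
      · exact ⟨k, mem_insert_self k s, hQ_blk col hcol⟩
      · obtain ⟨i, hi, hcol⟩ := hP_blk col hcol
        exact ⟨i, mem_insert_of_mem hi, hcol⟩

end Coloring

theorem strongRainbowConnected_boxProdFamily [Fintype ι] {m : ι → ℕ}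
    (h : ∀ i, StrongRainbowConnected (G i) (m i)) :
    StrongRainbowConnected (boxProdFamily G) (∑ i, m i) := by
  -- any linear order on `ι` serves to lay the colour blocks of the factors side by side
  let _ : LinearOrder ι := LinearOrder.lift' _ (Fintype.equivFin ι).injective
  choose c hc hgeo using h
  refine ⟨boxColoring m c, boxColoring_lt_sum hc, fun x y => ?_⟩
  obtain ⟨P, hP_len, hP_nd, -⟩ := exists_rainbow_walk_boxProdFamily hc
    (fun i a b => (hgeo i a b).imp fun _ hq => hq.2) univ (x := x) (y := y) (by simp)
  have hdist : P.length = (boxProdFamily G).dist x y := by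
    obtain ⟨R, hR⟩ := P.reachable.exists_walk_length_eq_dist
    refine le_antisymm ?_ (dist_le P)
    rw [hP_len, ← hR]
    exact sum_dist_le_length_boxProdFamily R
  exact ⟨P, P.isPath_of_length_eq_dist hdist, hdist, hP_nd⟩

end BoxProduct

/-- Bounds on rc and src of a Cartesian product of cycles (with C₂ = P₂). -/
theorem rc_src_torus_bounds {r : ℕ} (n : Fin r → ℕ) (h : ∀ k, 2 ≤ n k) :
    (∑ k, n k / 2) ≤ rc (boxProdFamily fun k => SimpleGraph.cycleGraph (n k)) ∧
    rc (boxProdFamily fun k => SimpleGraph.cycleGraph (n k)) ≤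
      src (boxProdFamily fun k => SimpleGraph.cycleGraph (n k)) ∧
    src (boxProdFamily fun k => SimpleGraph.cycleGraph (n k)) ≤ ∑ k, (n k + 1) / 2 := by
  have hsrc := strongRainbowConnected_boxProdFamily fun k =>
    strongRainbowConnected_cycleGraph (h k)
  refine ⟨?_, hsrc.rc_le_src, hsrc.src_le⟩
  obtain ⟨p, hp⟩ := hsrc.rainbowConnected.rainbowConnected_rc.exists_walk_length_le
    (fun k => ⟨0, by have := h k; omega⟩) (fun k => ⟨n k / 2, by have := h k; omega⟩)
  calc ∑ k, n k / 2
      = ∑ k, (cycleGraph (n k)).dist ⟨0, by have := h k; omega⟩ ⟨n k / 2, by have := h k; omega⟩ :=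
        sum_congr rfl fun k _ => (dist_cycleGraph_zero_half (h k)).symm
    _ ≤ p.length := sum_dist_le_length_boxProdFamily p
    _ ≤ _ := hp
end

section
/- In G(2^m, 2), for every vertex v there exists a shortest path from 0 to v, represented as a sequence of steps ±2^j, containing no pair +2^j and −2^j for the same j, and such that for every 0 ≤ i ≤ m−2, the path does not use both a step ±2^i and a step ±2^{i+1}. -/
/-- The recursive circulant `G(N,d)`: the circulant graph on `ZMod N` with jumps
`±d^i` for `0 ≤ i ≤ ⌈log_d N⌉ - 1`. -/
def recCirc (N d : ℕ) : SimpleGraph (ZMod N) :=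
  SimpleGraph.circulantGraph {x : ZMod N | ∃ i < Nat.clog d N, x = (d : ZMod N) ^ i}

/-- The value of a step: `(j, true)` is `+d^j` and `(j, false)` is `-d^j`. -/
def stepVal (N d : ℕ) (p : ℕ × Bool) : ZMod N :=
  if p.2 then (d : ZMod N) ^ p.1 else -((d : ZMod N) ^ p.1)

/-!
Among the shortest step lists from `0` to `v`, take one whose sum of exponents is maximal.
A cancelling pair `+2^j, -2^j` could be dropped, and a pair `±(2^i - 2^(i+1)) = ∓2^i`
replaced by one step. A same-sign pair `2^i + 2^(i+1) = -2^i + 2^(i+2)` can be exchanged without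
lengthening the list while raising the sum of exponents, and when `i + 2 = m` the step
`2^(i+2) = 2^m = 0` can even be dropped.
-/

theorem List.exists_perm_cons_cons {α : Type*} [DecidableEq α] {a b : α} {L : List α}
    (ha : a ∈ L) (hb : b ∈ L) (hab : a ≠ b) : ∃ T, L.Perm (a :: b :: T) :=
  ⟨(L.erase a).erase b, (perm_cons_erase ha).trans
    (.cons a (perm_cons_erase ((mem_erase_of_ne hab.symm).2 hb)))⟩

open SimpleGraph

section StepLists

variable {N d : ℕ}

def IsStepList (N d : ℕ) (v : ZMod N) (L : List (ℕ × Bool)) : Prop :=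
  (∀ p ∈ L, p.1 < Nat.clog d N) ∧ (L.map (stepVal N d)).sum = v

def IsShortestStepList (N d : ℕ) (v : ZMod N) (L : List (ℕ × Bool)) : Prop :=
  IsStepList N d v L ∧ L.length = (recCirc N d).dist 0 v

theorem stepVal_ne_zero {p : ℕ × Bool} (hp : p.1 < Nat.clog d N) : stepVal N d p ≠ 0 := by
  have hd : 1 < d := by
    by_contra! h
    simp [Nat.clog_of_left_le_one h] at hp
  have hpow : (d : ZMod N) ^ p.1 ≠ 0 := by
    rw [← Nat.cast_pow, Ne, ZMod.natCast_eq_zero_iff]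
    exact Nat.not_dvd_of_pos_of_lt (by positivity) (Nat.pow_lt_of_lt_clog hp)
  unfold stepVal
  split <;> simpa using hpow

theorem recCirc_adj_add_stepVal (a : ZMod N) {p : ℕ × Bool} (hp : p.1 < Nat.clog d N) :
    (recCirc N d).Adj a (a + stepVal N d p) := by
  rw [recCirc, circulantGraph_adj]
  refine ⟨by simpa using stepVal_ne_zero hp, ?_⟩
  cases h : p.2
  · exact .inl ⟨p.1, hp, by simp [stepVal, h]⟩
  · exact .inr ⟨p.1, hp, by simp [stepVal, h]⟩

theorem exists_stepVal_of_recCirc_adj {a b : ZMod N} (h : (recCirc N d).Adj a b) :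
    ∃ p : ℕ × Bool, p.1 < Nat.clog d N ∧ b = a + stepVal N d p := by
  rw [recCirc, circulantGraph_adj] at h
  rcases h.2 with ⟨i, hi, hab⟩ | ⟨i, hi, hba⟩
  · exact ⟨(i, false), hi, by simp [stepVal, ← hab]⟩
  · exact ⟨(i, true), hi, by simp [stepVal, ← hba]⟩

theorem exists_walk_of_forall_lt_clog {L : List (ℕ × Bool)}
    (hL : ∀ p ∈ L, p.1 < Nat.clog d N) (a : ZMod N) :
    ∃ w : (recCirc N d).Walk a (a + (L.map (stepVal N d)).sum), w.length = L.length := by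
  induction L generalizing a with
  | nil => exact ⟨Walk.nil.copy rfl (by simp), by simp⟩
  | cons p L ih =>
    obtain ⟨w, hw⟩ := ih (fun q hq => hL q (List.mem_cons_of_mem p hq)) (a + stepVal N d p)
    exact ⟨(Walk.cons (recCirc_adj_add_stepVal a (hL p List.mem_cons_self)) w).copy rfl
      (by simp [add_assoc]), by simp [hw]⟩

theorem exists_isStepList_of_walk {a b : ZMod N} (w : (recCirc N d).Walk a b) :
    ∃ L, IsStepList N d (b - a) L ∧ L.length = w.length := by
  induction w with
  | nil => exact ⟨[], ⟨by simp, by simp⟩, rfl⟩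
  | cons h w ih =>
    obtain ⟨L, ⟨hlt, hsum⟩, hlen⟩ := ih
    obtain ⟨p, hp, rfl⟩ := exists_stepVal_of_recCirc_adj h
    refine ⟨p :: L, ⟨?_, ?_⟩, by simp [hlen]⟩
    · simpa [hp] using hlt
    · simp only [List.map_cons, List.sum_cons, hsum]
      abel

theorem IsStepList.reachable {v : ZMod N} {L : List (ℕ × Bool)} (hL : IsStepList N d v L) :
    (recCirc N d).Reachable 0 v := by
  obtain ⟨w, -⟩ := exists_walk_of_forall_lt_clog hL.1 0
  exact ⟨w.copy rfl ((zero_add _).trans hL.2)⟩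

theorem IsStepList.dist_le {v : ZMod N} {L : List (ℕ × Bool)} (hL : IsStepList N d v L) :
    (recCirc N d).dist 0 v ≤ L.length := by
  obtain ⟨w, hw⟩ := exists_walk_of_forall_lt_clog hL.1 0
  simpa [hw] using SimpleGraph.dist_le (w.copy rfl ((zero_add _).trans hL.2))

theorem exists_isShortestStepList {v : ZMod N} (h : (recCirc N d).Reachable 0 v) :
    ∃ L, IsShortestStepList N d v L := by
  obtain ⟨w, hw⟩ := h.exists_walk_length_eq_dist
  obtain ⟨L, hL, hlen⟩ := exists_isStepList_of_walk w
  exact ⟨L, by simpa using hL, hlen.trans hw⟩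

theorem recCirc_reachable [NeZero N] (hd : 1 < d) (v : ZMod N) : (recCirc N d).Reachable 0 v := by
  refine IsStepList.reachable (L := List.replicate v.val (0, true)) ⟨fun p hp => ?_, ?_⟩
  · obtain ⟨hv, rfl⟩ := List.mem_replicate.1 hp
    exact Nat.clog_pos hd (lt_of_le_of_lt (Nat.one_le_iff_ne_zero.2 hv) v.val_lt)
  · simp [stepVal]

theorem exists_isShortestStepList_forall_sum_fst_le [NeZero N] (hd : 1 < d) (v : ZMod N) :
    ∃ L, IsShortestStepList N d v L ∧
      ∀ L', IsShortestStepList N d v L' → (L'.map Prod.fst).sum ≤ (L.map Prod.fst).sum := by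
  set S := {k | ∃ L, IsShortestStepList N d v L ∧ (L.map Prod.fst).sum = k}
  have hne : S.Nonempty := by
    obtain ⟨L, hL⟩ := exists_isShortestStepList (recCirc_reachable hd v)
    exact ⟨_, L, hL, rfl⟩
  have hbdd : BddAbove S := by
    refine ⟨(recCirc N d).dist 0 v * Nat.clog d N, ?_⟩
    rintro _ ⟨L, hL, rfl⟩
    have hfst : ∀ k ∈ L.map Prod.fst, k ≤ Nat.clog d N := by
      simp only [List.mem_map]
      rintro _ ⟨p, hp, rfl⟩
      exact (hL.1.1 p hp).le
    simpa [hL.2] using List.sum_le_card_nsmul _ _ hfst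
  obtain ⟨L, hL, hmax⟩ := Nat.sSup_mem hne hbdd
  exact ⟨L, hL, fun L' hL' => hmax ▸ le_csSup hbdd ⟨L', hL', rfl⟩⟩

end StepLists

section Exchange

variable {N d : ℕ} {v : ZMod N} {L : List (ℕ × Bool)}

theorem IsStepList.append_of_perm {a b : ℕ × Bool} {T R : List (ℕ × Bool)}
    (hL : IsStepList N d v L) (hperm : L.Perm (a :: b :: T))
    (hR : ∀ p ∈ R, p.1 < Nat.clog d N)
    (hsum : (R.map (stepVal N d)).sum = stepVal N d a + stepVal N d b) :
    IsStepList N d v (R ++ T) := by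
  refine ⟨fun p hp => ?_, ?_⟩
  · rcases List.mem_append.1 hp with hp | hp
    · exact hR p hp
    · exact hL.1 p (hperm.symm.subset (by simp [hp]))
  · rw [← hL.2, (hperm.map _).sum_eq]
    simp [hsum, add_assoc]

theorem IsShortestStepList.two_le_length {a b : ℕ × Bool} {R : List (ℕ × Bool)}
    (hL : IsShortestStepList N d v L) (ha : a ∈ L) (hb : b ∈ L) (hab : a ≠ b)
    (hR : ∀ p ∈ R, p.1 < Nat.clog d N)
    (hsum : (R.map (stepVal N d)).sum = stepVal N d a + stepVal N d b) : 2 ≤ R.length := by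
  obtain ⟨T, hperm⟩ := List.exists_perm_cons_cons ha hb hab
  have hdist := (hL.1.append_of_perm hperm hR hsum).dist_le
  have hlen := hperm.length_eq
  have hshort := hL.2
  simp only [List.length_append, List.length_cons] at hdist hlen
  omega

theorem stepVal_add_stepVal_not (j : ℕ) (s : Bool) :
    stepVal N d (j, s) + stepVal N d (j, !s) = 0 := by
  cases s <;> simp [stepVal]

theorem IsShortestStepList.not_mem_true_and_false (hL : IsShortestStepList N d v L) (j : ℕ) :
    ¬((j, true) ∈ L ∧ (j, false) ∈ L) := fun ⟨ht, hf⟩ =>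
  absurd (hL.two_le_length (R := []) ht hf (by simp) (by simp)
    (by simpa using (stepVal_add_stepVal_not j true).symm)) (by simp)

theorem stepVal_two_add_succ_not (i : ℕ) (s : Bool) :
    stepVal N 2 (i, s) + stepVal N 2 (i + 1, !s) = stepVal N 2 (i, !s) := by
  cases s <;> simp [stepVal, pow_succ] <;> ring

theorem stepVal_two_add_succ (i : ℕ) (s : Bool) :
    stepVal N 2 (i, s) + stepVal N 2 (i + 1, s) =
      stepVal N 2 (i, !s) + stepVal N 2 (i + 2, s) := by
  cases s <;> simp [stepVal, pow_succ] <;> ring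

theorem stepVal_two_pow_self (m : ℕ) (s : Bool) : stepVal (2 ^ m) 2 (m, s) = 0 := by
  have : (2 : ZMod (2 ^ m)) ^ m = 0 := by exact_mod_cast ZMod.natCast_self (2 ^ m)
  cases s <;> simp [stepVal, this]

end Exchange

theorem IsShortestStepList.not_mem_succ_not {N : ℕ} {v : ZMod N} {L : List (ℕ × Bool)}
    (hL : IsShortestStepList N 2 v L) {i : ℕ} {s : Bool} (hi : (i, s) ∈ L) :
    (i + 1, !s) ∉ L := fun hi' =>
  absurd (hL.two_le_length (R := [(i, !s)]) hi hi' (by simp) (by simpa using hL.1.1 _ hi)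
    (by simpa using (stepVal_two_add_succ_not i s).symm)) (by simp)

theorem IsShortestStepList.not_mem_succ_of_forall_sum_fst_le {m : ℕ} {v : ZMod (2 ^ m)}
    {L : List (ℕ × Bool)} (hL : IsShortestStepList (2 ^ m) 2 v L)
    (hmax : ∀ L', IsShortestStepList (2 ^ m) 2 v L' →
      (L'.map Prod.fst).sum ≤ (L.map Prod.fst).sum)
    {i : ℕ} {s : Bool} (hi : (i, s) ∈ L) : (i + 1, s) ∉ L := by
  intro hi'
  have hclog : Nat.clog 2 (2 ^ m) = m := Nat.clog_pow 2 m one_lt_two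
  have him : i + 1 < m := hclog ▸ hL.1.1 _ hi'
  have hne : (i, s) ≠ (i + 1, s) := by simp
  obtain hlt | rfl : i + 2 < m ∨ i + 2 = m := by omega
  · obtain ⟨T, hperm⟩ := List.exists_perm_cons_cons hi hi' hne
    have hR : IsStepList (2 ^ m) 2 v ([(i, !s), (i + 2, s)] ++ T) :=
      hL.1.append_of_perm hperm (by simp [hclog]; omega)
        (by simpa using (stepVal_two_add_succ i s).symm)
    have hlen := hperm.length_eq
    have hsum := (hperm.map Prod.fst).sum_eq
    have hle := hmax _ ⟨hR, by simp [← hL.2, hlen]⟩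
    simp only [List.map_append, List.map_cons, List.map_nil, List.sum_append, List.sum_cons,
      List.sum_nil] at hle hsum
    omega
  · exact absurd (hL.two_le_length (R := [(i, !s)]) hi hi' hne (by simp [hclog])
      (by simp [stepVal_two_add_succ, stepVal_two_pow_self])) (by simp)

theorem exists_shortest_path_steps_two_general (m : ℕ) (v : ZMod (2 ^ m)) :
    ∃ L : List (ℕ × Bool),
      (∀ p ∈ L, p.1 < m) ∧
      (L.map (stepVal (2 ^ m) 2)).sum = v ∧
      L.length = (recCirc (2 ^ m) 2).dist 0 v ∧
      (∀ j, ¬((j, true) ∈ L ∧ (j, false) ∈ L)) ∧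
      (∀ i ≤ m - 2, ¬((∃ s, (i, s) ∈ L) ∧ (∃ s, (i + 1, s) ∈ L))) := by
  obtain ⟨L, hL, hmax⟩ := exists_isShortestStepList_forall_sum_fst_le one_lt_two v
  refine ⟨L, by simpa [Nat.clog_pow 2 m one_lt_two] using hL.1.1, hL.1.2, hL.2,
    hL.not_mem_true_and_false, ?_⟩
  rintro i - ⟨⟨s, hs⟩, ⟨s', hs'⟩⟩
  obtain rfl | rfl : s' = s ∨ s' = !s := by cases s <;> cases s' <;> simp
  · exact hL.not_mem_succ_of_forall_sum_fst_le hmax hs hs'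
  · exact hL.not_mem_succ_not hs hs'

/-- Shortest-path lemma for G(2^m, 2): a shortest path from 0 to v can be chosen with
no cancelling pair ±2^j and never using steps at two consecutive exponents. -/
theorem exists_shortest_path_steps_two (m : ℕ) (hm : 1 ≤ m) (v : ZMod (2 ^ m)) :
    ∃ L : List (ℕ × Bool),
      (∀ p ∈ L, p.1 < m) ∧
      (L.map (stepVal (2 ^ m) 2)).sum = v ∧
      L.length = (recCirc (2 ^ m) 2).dist 0 v ∧
      (∀ j, ¬((j, true) ∈ L ∧ (j, false) ∈ L)) ∧
      (∀ i ≤ m - 2, ¬((∃ s, (i, s) ∈ L) ∧ (∃ s, (i + 1, s) ∈ L))) :=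
  exists_shortest_path_steps_two_general m v
end
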